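/- Each of the sets X_n = {(x(α,n), x(β,n)) : n ∈ A_α ∩ B_β, α, β ∈ ω₁} is a closed discrete subset of S_{ω₁} × S_{ω₁}. -/

import Mathlib

open Set Filter Topology Cardinal

/-- The sequential fan with spokes indexed by `κ`: underlying set is
`Option (κ × ℕ)`, with `none` the apex and `some (α, n)` the `n`-th point
of the `α`-th spoke. -/
def Fan (κ : Type*) : Type _ := Option (κ × ℕ)

/-- The quotient topology on the fan: each point `some (α, n)` is isolated and
a set containing the apex is open iff it contains a tail of every spoke. -/
instance Fan.instTopologicalSpace (κ : Type*) : TopologicalSpace (Fan κ) where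
  IsOpen s := (none : Option (κ × ℕ)) ∈ s → ∀ α : κ, {n : ℕ | (some (α, n) : Option (κ × ℕ)) ∉ s}.Finite
  isOpen_univ := by intro _ α; exact Set.finite_empty.subset (fun n hn => (hn trivial).elim)
  isOpen_inter := by
    intro s t hs ht hmem α
    refine ((hs hmem.1 α).union (ht hmem.2 α)).subset ?_
    intro n hn
    by_contra h
    simp only [Set.mem_union, Set.mem_setOf_eq] at h
    push_neg at h
    exact hn ⟨h.1, h.2⟩
  isOpen_sUnion := by
    intro S hS hmem α
    obtain ⟨s, hsS, hs⟩ := hmem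
    refine (hS s hsS hs α).subset ?_
    intro n hn hns
    exact hn (Set.mem_sUnion.2 ⟨s, hsS, hns⟩)

/-- The apex of the sequential fan. -/
def Fan.apex {κ : Type*} : Fan κ := (none : Option (κ × ℕ))

/-- The `n`-th point of the `α`-th spoke of the sequential fan. -/
def Fan.pt {κ : Type*} (α : κ) (n : ℕ) : Fan κ := (some (α, n) : Option (κ × ℕ))

/-!
The points `(Fan.pt α n, Fan.pt β n)` all lie in the square of the `n`-th level of the fan, the set of
`n`-th points of the spokes. That level is closed, since it meets every spoke in one point and misses
the apex, and all its points are isolated; so every subset of its square is closed and discrete.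
-/

section ClosedDiscrete

variable {X : Type*} [TopologicalSpace X] {s t : Set X}

theorem IsClosed.of_subset_of_isOpen_singleton (hs : IsClosed s)
    (hiso : ∀ x ∈ s, IsOpen ({x} : Set X)) (hts : t ⊆ s) : IsClosed t := by
  refine closure_subset_iff_isClosed.mp fun x hx ↦ ?_
  have hxs : x ∈ s := hs.closure_subset (closure_mono hts hx)
  obtain ⟨y, rfl, hy⟩ := mem_closure_iff.mp hx {x} (hiso x hxs) rfl
  exact hy

theorem discreteTopology_of_isOpen_singleton (hiso : ∀ x ∈ s, IsOpen ({x} : Set X)) :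
    DiscreteTopology s :=
  discreteTopology_subtype_iff'.mpr fun x hx ↦
    ⟨{x}, hiso x hx, singleton_inter_of_mem hx⟩

end ClosedDiscrete

namespace Fan

variable {κ : Type*}

theorem isOpen_iff {s : Set (Fan κ)} :
    IsOpen s ↔ (apex ∈ s → ∀ α : κ, {n : ℕ | pt α n ∉ s}.Finite) :=
  Iff.rfl

theorem isClosed_iff {s : Set (Fan κ)} :
    IsClosed s ↔ (apex ∉ s → ∀ α : κ, {n : ℕ | pt α n ∈ s}.Finite) := by
  simp only [← isOpen_compl_iff, isOpen_iff, mem_compl_iff, not_not]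

theorem isOpen_of_apex_notMem {s : Set (Fan κ)} (h : apex ∉ s) : IsOpen s :=
  isOpen_iff.mpr fun h' ↦ (h h').elim

theorem isOpen_singleton_pt (α : κ) (n : ℕ) : IsOpen ({pt α n} : Set (Fan κ)) :=
  isOpen_of_apex_notMem (Option.some_ne_none (α, n)).symm

def level (κ : Type*) (n : ℕ) : Set (Fan κ) := range fun α ↦ pt α n

theorem isClosed_level (n : ℕ) : IsClosed (level κ n) := by
  refine isClosed_iff.mpr fun _ α ↦ (finite_singleton n).subset ?_
  rintro m ⟨β, hβ⟩
  have hαβ : (α, m) = (β, n) := Option.some_injective _ hβ.symm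
  exact (Prod.ext_iff.mp hαβ).2

theorem isOpen_singleton_of_mem_level {n : ℕ} {x : Fan κ} (hx : x ∈ level κ n) :
    IsOpen ({x} : Set (Fan κ)) := by
  obtain ⟨α, rfl⟩ := hx
  exact isOpen_singleton_pt α n

theorem isOpen_singleton_of_mem_level_prod {n : ℕ} {p : Fan κ × Fan κ}
    (hp : p ∈ level κ n ×ˢ level κ n) : IsOpen ({p} : Set (Fan κ × Fan κ)) := by
  rw [← Prod.mk.eta (p := p), ← singleton_prod_singleton]
  exact (isOpen_singleton_of_mem_level hp.1).prod (isOpen_singleton_of_mem_level hp.2)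

theorem isClosed_and_discreteTopology_of_subset_level_prod {n : ℕ} {t : Set (Fan κ × Fan κ)}
    (ht : t ⊆ level κ n ×ˢ level κ n) : IsClosed t ∧ DiscreteTopology t :=
  ⟨((isClosed_level n).prod (isClosed_level n)).of_subset_of_isOpen_singleton
      (fun _ ↦ isOpen_singleton_of_mem_level_prod) ht,
    discreteTopology_of_isOpen_singleton fun _ hp ↦ isOpen_singleton_of_mem_level_prod (ht hp)⟩

end Fan

theorem fan_square_family_closed_discrete_general (ι : Type)
    (A B : ι → Set ℕ)
    (X : ℕ → Set (Fan ι × Fan ι))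
    (hX : ∀ n, X n = {p | ∃ α β : ι, n ∈ A α ∩ B β ∧ p = (Fan.pt α n, Fan.pt β n)})
    (n : ℕ) :
    IsClosed (X n) ∧ DiscreteTopology ↥(X n) := by
  refine Fan.isClosed_and_discreteTopology_of_subset_level_prod (n := n) ?_
  rw [hX n]
  rintro _ ⟨α, β, -, rfl⟩
  exact ⟨⟨α, rfl⟩, ⟨β, rfl⟩⟩

/-- Each set `X_n` built from almost disjoint families `A`, `B` is a closed
discrete subset of `S_{ω₁} × S_{ω₁}`. -/
theorem fan_square_family_closed_discrete (ι : Type) (hι : #ι = aleph 1)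
    (A B : ι → Set ℕ) (hA : ∀ α, (A α).Infinite) (hB : ∀ α, (B α).Infinite)
    (hAB : ∀ α β, (A α ∩ B β).Finite)
    (X : ℕ → Set (Fan ι × Fan ι))
    (hX : ∀ n, X n = {p | ∃ α β : ι, n ∈ A α ∩ B β ∧ p = (Fan.pt α n, Fan.pt β n)})
    (n : ℕ) :
    IsClosed (X n) ∧ DiscreteTopology ↥(X n) :=
  fan_square_family_closed_discrete_general ι A B X hX n
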